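/- (Two time-point G-computation, s=2) In a two time-point longitudinal study with data (L(0), A(0), L(1), A(1), Y) and counterfactuals Y_{a(0),a(1)} satisfying consistency Y = Y_{A(0),A(1)}, SRA (A(0) ⟂ X | L(0) and A(1) ⟂ X | (A(0), L(0), L(1)) where X is the collection of all counterfactuals of L(1) and Y), and positivity, the counterfactual mean is identified: E[Y_{a(0),a(1)}] = Σ_{l(0),l(1)} E[Y | A(0)=a(0), A(1)=a(1), L(0)=l(0), L(1)=l(1)] · P(L(1)=l(1) | A(0)=a(0), L(0)=l(0)) · P(L(0)=l(0)). -/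

import Mathlib

open Finset
open scoped Classical

noncomputable section

def pr {Ω : Type} [Fintype Ω] (μ : Ω → ℝ) (E : Ω → Prop) : ℝ :=
  ∑ ω, if E ω then μ ω else 0

def cpr {Ω : Type} [Fintype Ω] (μ : Ω → ℝ) (E F : Ω → Prop) : ℝ :=
  pr μ (fun ω => E ω ∧ F ω) / pr μ F

def ex {Ω : Type} [Fintype Ω] (μ : Ω → ℝ) (f : Ω → ℝ) : ℝ :=
  ∑ ω, f ω * μ ω

def cex {Ω : Type} [Fintype Ω] (μ : Ω → ℝ) (f : Ω → ℝ) (F : Ω → Prop) : ℝ :=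
  (∑ ω, if F ω then f ω * μ ω else 0) / pr μ F

/-!
Let `X` collect all potential outcomes, so that `Y_{a(0),a(1)} = g X` for a fixed function `g`.
Given `L(0) = l(0)`, sequential randomisation and positivity at time 0 let us reweight the
mass of `{X = x}` onto `{A(0) = a(0)}`:
`P(X = x, l(0)) = P(X = x, a(0), l(0)) P(l(0)) / P(a(0), l(0))`.
Splitting by `L(1)` and reweighting once more at time 1 moves all the mass onto
`{A(0) = a(0), A(1) = a(1)}`, where consistency turns `g X` into the observed `Y`; the weights that
accumulate are exactly those of the g-formula.
-/

section Probability

variable {Ω : Type} [Fintype Ω] (μ : Ω → ℝ)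

lemma pr_eq_sum_filter (E : Ω → Prop) : pr μ E = ∑ ω with E ω, μ ω :=
  (sum_filter _ _).symm

lemma pr_congr {E F : Ω → Prop} (h : ∀ ω, E ω ↔ F ω) : pr μ E = pr μ F :=
  congrArg (pr μ) (funext fun ω => propext (h ω))

lemma cex_congr (f : Ω → ℝ) {E F : Ω → Prop} (h : ∀ ω, E ω ↔ F ω) :
    cex μ f E = cex μ f F :=
  congrArg (cex μ f) (funext fun ω => propext (h ω))

variable {μ}

lemma pr_nonneg (hμ : ∀ ω, 0 ≤ μ ω) (E : Ω → Prop) : 0 ≤ pr μ E :=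
  sum_nonneg fun ω _ => ite_nonneg (hμ ω) le_rfl

lemma pr_mono (hμ : ∀ ω, 0 ≤ μ ω) {E F : Ω → Prop} (h : ∀ ω, E ω → F ω) :
    pr μ E ≤ pr μ F :=
  sum_le_sum fun ω _ => by
    by_cases hE : E ω
    · simp [hE, h ω hE]
    · simpa [hE] using ite_nonneg (hμ ω) le_rfl

variable (μ)

lemma pr_eq_sum_pr_and {κ : Type} [Fintype κ] (L : Ω → κ) (E : Ω → Prop) :
    pr μ E = ∑ l, pr μ (fun ω => E ω ∧ L ω = l) := by
  rw [pr_eq_sum_filter, ← sum_fiberwise _ L μ]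
  simp only [pr_eq_sum_filter, filter_filter]
  -- the two sides carry different (classical vs. `instDecidableAnd`) decidability instances
  congr!

lemma sum_mul_pr_eq_sum_ite {β : Type} (X : Ω → β) (g : β → ℝ) {Y : Ω → ℝ}
    {E : Ω → Prop} (hY : ∀ ω, E ω → Y ω = g (X ω)) :
    ∑ t ∈ univ.image X, g t * pr μ (fun ω => X ω = t ∧ E ω) =
      ∑ ω, if E ω then Y ω * μ ω else 0 := by
  rw [← sum_filter, ← sum_fiberwise_of_maps_to fun ω _ => mem_image_of_mem X (mem_univ ω)]
  refine sum_congr rfl fun t _ => ?_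
  rw [pr_eq_sum_filter, mul_sum, filter_filter]
  refine sum_congr (by ext; simp [and_comm]) fun ω hω => ?_
  obtain ⟨-, hE, rfl⟩ := mem_filter.1 hω
  rw [← hY ω hE]

variable {μ}

lemma pr_and_eq_of_condIndep (hμ : ∀ ω, 0 ≤ μ ω) {A B F : Ω → Prop}
    (hind : 0 < pr μ F → cpr μ (fun ω => A ω ∧ B ω) F = cpr μ A F * cpr μ B F)
    (hpos : 0 < pr μ F → 0 < cpr μ A F) :
    pr μ (fun ω => B ω ∧ F ω) =
      pr μ (fun ω => (A ω ∧ B ω) ∧ F ω) * (pr μ F / pr μ (fun ω => A ω ∧ F ω)) := by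
  rcases (pr_nonneg hμ F).eq_or_lt with hF | hF
  · have hBF := (pr_mono hμ fun ω (h : B ω ∧ F ω) => h.2).trans_eq hF.symm
    rw [← hF, zero_div, mul_zero]
    exact hBF.antisymm (pr_nonneg hμ _)
  · have hAF : 0 < pr μ (fun ω => A ω ∧ F ω) := (div_pos_iff_of_pos_right hF).1 (hpos hF)
    have h := hind hF
    simp only [cpr] at h
    field_simp at h
    rw [mul_div_assoc', eq_div_iff hAF.ne']
    linarith

end Probability

section GComputation

variable {Ω β 𝒜₀ 𝒜₁ ℒ₀ ℒ₁ : Type} [Fintype Ω] [Fintype ℒ₀] [Fintype ℒ₁]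
  {μ : Ω → ℝ}

lemma sum_mul_pr_eq_of_condIndep (hμ : ∀ ω, 0 ≤ μ ω) (X : Ω → β) (s : Finset β)
    (g : β → ℝ) {A F : Ω → Prop}
    (hind : ∀ t, 0 < pr μ F →
      cpr μ (fun ω => A ω ∧ X ω = t) F = cpr μ A F * cpr μ (fun ω => X ω = t) F)
    (hpos : 0 < pr μ F → 0 < cpr μ A F) :
    ∑ t ∈ s, g t * pr μ (fun ω => X ω = t ∧ F ω) =
      (∑ t ∈ s, g t * pr μ (fun ω => X ω = t ∧ A ω ∧ F ω)) *
        (pr μ F / pr μ (fun ω => A ω ∧ F ω)) := by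
  rw [sum_mul]
  refine sum_congr rfl fun t _ => ?_
  rw [pr_and_eq_of_condIndep hμ (hind t) hpos,
    pr_congr μ fun ω => and_left_comm.trans and_assoc.symm]
  ring

lemma sum_mul_pr_eq_cex_mul_pr_of_condIndep (hμ : ∀ ω, 0 ≤ μ ω) (X : Ω → β)
    (g : β → ℝ) {Y : Ω → ℝ} {A F : Ω → Prop} (hY : ∀ ω, A ω → F ω → Y ω = g (X ω))
    (hind : ∀ t, 0 < pr μ F →
      cpr μ (fun ω => A ω ∧ X ω = t) F = cpr μ A F * cpr μ (fun ω => X ω = t) F)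
    (hpos : 0 < pr μ F → 0 < cpr μ A F) :
    ∑ t ∈ univ.image X, g t * pr μ (fun ω => X ω = t ∧ F ω) =
      cex μ Y (fun ω => A ω ∧ F ω) * pr μ F := by
  rw [sum_mul_pr_eq_of_condIndep hμ X _ g hind hpos,
    sum_mul_pr_eq_sum_ite μ X g fun ω h => hY ω h.1 h.2, cex]
  ring

variable (μ) in
def gFormula (L0 : Ω → ℒ₀) (A0 : Ω → 𝒜₀) (L1 : Ω → ℒ₁) (A1 : Ω → 𝒜₁)
    (Y : Ω → ℝ) (a0 : 𝒜₀) (a1 : 𝒜₁) : ℝ :=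
  ∑ l0 : ℒ₀, ∑ l1 : ℒ₁,
    cex μ Y (fun ω => A0 ω = a0 ∧ A1 ω = a1 ∧ L0 ω = l0 ∧ L1 ω = l1) *
    cpr μ (fun ω => L1 ω = l1) (fun ω => A0 ω = a0 ∧ L0 ω = l0) *
    pr μ (fun ω => L0 ω = l0)

theorem sum_mul_eq_gFormula_of_condIndep (hμ : ∀ ω, 0 ≤ μ ω)
    (L0 : Ω → ℒ₀) (A0 : Ω → 𝒜₀) (L1 : Ω → ℒ₁) (A1 : Ω → 𝒜₁)
    (X : Ω → β) (g : β → ℝ) (Y : Ω → ℝ) (a0 : 𝒜₀) (a1 : 𝒜₁)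
    (hY : ∀ ω, A0 ω = a0 → A1 ω = a1 → Y ω = g (X ω))
    (hind0 : ∀ t l0, 0 < pr μ (fun ω => L0 ω = l0) →
      cpr μ (fun ω => A0 ω = a0 ∧ X ω = t) (fun ω => L0 ω = l0) =
        cpr μ (fun ω => A0 ω = a0) (fun ω => L0 ω = l0) *
          cpr μ (fun ω => X ω = t) (fun ω => L0 ω = l0))
    (hind1 : ∀ t l0 l1, 0 < pr μ (fun ω => A0 ω = a0 ∧ L0 ω = l0 ∧ L1 ω = l1) →
      cpr μ (fun ω => A1 ω = a1 ∧ X ω = t)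
          (fun ω => A0 ω = a0 ∧ L0 ω = l0 ∧ L1 ω = l1) =
        cpr μ (fun ω => A1 ω = a1) (fun ω => A0 ω = a0 ∧ L0 ω = l0 ∧ L1 ω = l1) *
          cpr μ (fun ω => X ω = t) (fun ω => A0 ω = a0 ∧ L0 ω = l0 ∧ L1 ω = l1))
    (hpos0 : ∀ l0, 0 < pr μ (fun ω => L0 ω = l0) →
      0 < cpr μ (fun ω => A0 ω = a0) (fun ω => L0 ω = l0))
    (hpos1 : ∀ l0 l1, 0 < pr μ (fun ω => A0 ω = a0 ∧ L0 ω = l0 ∧ L1 ω = l1) →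
      0 < cpr μ (fun ω => A1 ω = a1) (fun ω => A0 ω = a0 ∧ L0 ω = l0 ∧ L1 ω = l1)) :
    ∑ ω, g (X ω) * μ ω = gFormula μ L0 A0 L1 A1 Y a0 a1 := by
  set S := univ.image X
  have hsplit : ∑ ω, g (X ω) * μ ω =
      ∑ l0, ∑ t ∈ S, g t * pr μ (fun ω => X ω = t ∧ L0 ω = l0) := by
    rw [← sum_fiberwise univ L0]
    congr! 1 with l0
    rw [sum_mul_pr_eq_sum_ite μ X g fun _ _ => rfl, sum_filter]
  rw [hsplit, gFormula]
  refine sum_congr rfl fun l0 _ => ?_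
  set r0 := pr μ (fun ω => L0 ω = l0) / pr μ (fun ω => A0 ω = a0 ∧ L0 ω = l0)
  calc ∑ t ∈ S, g t * pr μ (fun ω => X ω = t ∧ L0 ω = l0)
      = (∑ t ∈ S, g t * pr μ (fun ω => X ω = t ∧ A0 ω = a0 ∧ L0 ω = l0)) * r0 :=
        sum_mul_pr_eq_of_condIndep hμ X S g (hind0 · l0) (hpos0 l0)
    _ = (∑ l1, ∑ t ∈ S,
          g t * pr μ (fun ω => X ω = t ∧ A0 ω = a0 ∧ L0 ω = l0 ∧ L1 ω = l1)) * r0 := by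
        rw [sum_comm]
        congr! 2 with t
        rw [pr_eq_sum_pr_and μ L1, mul_sum]
        simp only [and_assoc]
    _ = (∑ l1, cex μ Y (fun ω => A1 ω = a1 ∧ A0 ω = a0 ∧ L0 ω = l0 ∧ L1 ω = l1) *
          pr μ (fun ω => A0 ω = a0 ∧ L0 ω = l0 ∧ L1 ω = l1)) * r0 := by
        congr! 2 with l1
        exact sum_mul_pr_eq_cex_mul_pr_of_condIndep hμ X g (fun ω h1 h => hY ω h.1 h1)
          (hind1 · l0 l1) (hpos1 l0 l1)
    _ = _ := by
        rw [sum_mul]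
        refine sum_congr rfl fun l1 _ => ?_
        rw [cex_congr μ Y fun ω => and_left_comm, cpr,
          pr_congr μ fun ω =>
            (and_comm.trans and_assoc : L1 ω = l1 ∧ A0 ω = a0 ∧ L0 ω = l0 ↔ _)]
        ring

end GComputation

section PotentialOutcomes

variable {Ω 𝒜₀ 𝒜₁ ℒ₁ : Type}

def potentialOutcomes (CL1 : 𝒜₀ → Ω → ℒ₁) (CY : 𝒜₀ → 𝒜₁ → Ω → ℝ) (ω : Ω) :
    (𝒜₀ → ℒ₁) × (𝒜₀ → 𝒜₁ → ℝ) :=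
  (fun a => CL1 a ω, fun a a' => CY a a' ω)

lemma potentialOutcomes_eq_iff {CL1 : 𝒜₀ → Ω → ℒ₁} {CY : 𝒜₀ → 𝒜₁ → Ω → ℝ} {ω : Ω}
    {t : (𝒜₀ → ℒ₁) × (𝒜₀ → 𝒜₁ → ℝ)} :
    potentialOutcomes CL1 CY ω = t ↔
      (∀ a, CL1 a ω = t.1 a) ∧ ∀ a a', CY a a' ω = t.2 a a' := by
  simp only [potentialOutcomes, Prod.ext_iff, funext_iff]

end PotentialOutcomes

theorem two_timepoint_gcomputation_general
    {Ω 𝒜₀ 𝒜₁ ℒ₀ ℒ₁ : Type} [Fintype Ω] [Fintype ℒ₀] [Fintype ℒ₁]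
    (μ : Ω → ℝ) (hμ : ∀ ω, 0 ≤ μ ω)
    (L0 : Ω → ℒ₀) (A0 : Ω → 𝒜₀) (L1 : Ω → ℒ₁) (A1 : Ω → 𝒜₁)
    (CL1 : 𝒜₀ → Ω → ℒ₁) (CY : 𝒜₀ → 𝒜₁ → Ω → ℝ) (Y : Ω → ℝ)
    (hconsY : ∀ ω, Y ω = CY (A0 ω) (A1 ω) ω)
    (SRA0 : ∀ (a0 : 𝒜₀) (c : 𝒜₀ → ℒ₁) (y : 𝒜₀ → 𝒜₁ → ℝ) (l0 : ℒ₀),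
      pr μ (fun ω => L0 ω = l0) > 0 →
      cpr μ (fun ω => A0 ω = a0 ∧ ((∀ a, CL1 a ω = c a) ∧ ∀ a a', CY a a' ω = y a a'))
        (fun ω => L0 ω = l0) =
      cpr μ (fun ω => A0 ω = a0) (fun ω => L0 ω = l0) *
      cpr μ (fun ω => (∀ a, CL1 a ω = c a) ∧ ∀ a a', CY a a' ω = y a a')
        (fun ω => L0 ω = l0))
    (SRA1 : ∀ (a1 : 𝒜₁) (c : 𝒜₀ → ℒ₁) (y : 𝒜₀ → 𝒜₁ → ℝ) (a0 : 𝒜₀) (l0 : ℒ₀) (l1 : ℒ₁),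
      pr μ (fun ω => A0 ω = a0 ∧ L0 ω = l0 ∧ L1 ω = l1) > 0 →
      cpr μ (fun ω => A1 ω = a1 ∧ ((∀ a, CL1 a ω = c a) ∧ ∀ a a', CY a a' ω = y a a'))
        (fun ω => A0 ω = a0 ∧ L0 ω = l0 ∧ L1 ω = l1) =
      cpr μ (fun ω => A1 ω = a1) (fun ω => A0 ω = a0 ∧ L0 ω = l0 ∧ L1 ω = l1) *
      cpr μ (fun ω => (∀ a, CL1 a ω = c a) ∧ ∀ a a', CY a a' ω = y a a')
        (fun ω => A0 ω = a0 ∧ L0 ω = l0 ∧ L1 ω = l1))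
    (POS0 : ∀ (a0 : 𝒜₀) (l0 : ℒ₀), pr μ (fun ω => L0 ω = l0) > 0 →
      cpr μ (fun ω => A0 ω = a0) (fun ω => L0 ω = l0) > 0)
    (POS1 : ∀ (a1 : 𝒜₁) (a0 : 𝒜₀) (l0 : ℒ₀) (l1 : ℒ₁),
      pr μ (fun ω => A0 ω = a0 ∧ L0 ω = l0 ∧ L1 ω = l1) > 0 →
      cpr μ (fun ω => A1 ω = a1) (fun ω => A0 ω = a0 ∧ L0 ω = l0 ∧ L1 ω = l1) > 0)
    (a0 : 𝒜₀) (a1 : 𝒜₁) :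
    ex μ (CY a0 a1) =
    ∑ l0 : ℒ₀, ∑ l1 : ℒ₁,
      cex μ Y (fun ω => A0 ω = a0 ∧ A1 ω = a1 ∧ L0 ω = l0 ∧ L1 ω = l1) *
      cpr μ (fun ω => L1 ω = l1) (fun ω => A0 ω = a0 ∧ L0 ω = l0) *
      pr μ (fun ω => L0 ω = l0) := 
  sum_mul_eq_gFormula_of_condIndep hμ L0 A0 L1 A1 (potentialOutcomes CL1 CY) (fun t => t.2 a0 a1)
    Y a0 a1 (fun ω h0 h1 => by rw [hconsY, h0, h1]; rfl)
    (fun t l0 h => by simpa only [potentialOutcomes_eq_iff] using SRA0 a0 t.1 t.2 l0 h)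
    (fun t l0 l1 h => by simpa only [potentialOutcomes_eq_iff] using SRA1 a1 t.1 t.2 a0 l0 l1 h)
    (POS0 a0) (POS1 a1 a0)

/-- two time-point G-computation (s = 2): under consistency, SRA
and positivity, the counterfactual mean `E[Y_{a0,a1}]` is identified by the
G-computation formula. -/
theorem two_timepoint_gcomputation
    {Ω 𝒜₀ 𝒜₁ ℒ₀ ℒ₁ : Type} [Fintype Ω] [Fintype 𝒜₀] [Fintype 𝒜₁] [Fintype ℒ₀] [Fintype ℒ₁]
    (μ : Ω → ℝ) (hμ : ∀ ω, 0 ≤ μ ω) (hsum : ∑ ω, μ ω = 1)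
    (L0 : Ω → ℒ₀) (A0 : Ω → 𝒜₀) (L1 : Ω → ℒ₁) (A1 : Ω → 𝒜₁)
    (CL1 : 𝒜₀ → Ω → ℒ₁) (CY : 𝒜₀ → 𝒜₁ → Ω → ℝ) (Y : Ω → ℝ)
    (hconsL : ∀ ω, L1 ω = CL1 (A0 ω) ω)
    (hconsY : ∀ ω, Y ω = CY (A0 ω) (A1 ω) ω)
    (SRA0 : ∀ (a0 : 𝒜₀) (c : 𝒜₀ → ℒ₁) (y : 𝒜₀ → 𝒜₁ → ℝ) (l0 : ℒ₀),
      pr μ (fun ω => L0 ω = l0) > 0 →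
      cpr μ (fun ω => A0 ω = a0 ∧ ((∀ a, CL1 a ω = c a) ∧ ∀ a a', CY a a' ω = y a a'))
        (fun ω => L0 ω = l0) =
      cpr μ (fun ω => A0 ω = a0) (fun ω => L0 ω = l0) *
      cpr μ (fun ω => (∀ a, CL1 a ω = c a) ∧ ∀ a a', CY a a' ω = y a a')
        (fun ω => L0 ω = l0))
    (SRA1 : ∀ (a1 : 𝒜₁) (c : 𝒜₀ → ℒ₁) (y : 𝒜₀ → 𝒜₁ → ℝ) (a0 : 𝒜₀) (l0 : ℒ₀) (l1 : ℒ₁),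
      pr μ (fun ω => A0 ω = a0 ∧ L0 ω = l0 ∧ L1 ω = l1) > 0 →
      cpr μ (fun ω => A1 ω = a1 ∧ ((∀ a, CL1 a ω = c a) ∧ ∀ a a', CY a a' ω = y a a'))
        (fun ω => A0 ω = a0 ∧ L0 ω = l0 ∧ L1 ω = l1) =
      cpr μ (fun ω => A1 ω = a1) (fun ω => A0 ω = a0 ∧ L0 ω = l0 ∧ L1 ω = l1) *
      cpr μ (fun ω => (∀ a, CL1 a ω = c a) ∧ ∀ a a', CY a a' ω = y a a')
        (fun ω => A0 ω = a0 ∧ L0 ω = l0 ∧ L1 ω = l1))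
    (POS0 : ∀ (a0 : 𝒜₀) (l0 : ℒ₀), pr μ (fun ω => L0 ω = l0) > 0 →
      cpr μ (fun ω => A0 ω = a0) (fun ω => L0 ω = l0) > 0)
    (POS1 : ∀ (a1 : 𝒜₁) (a0 : 𝒜₀) (l0 : ℒ₀) (l1 : ℒ₁),
      pr μ (fun ω => A0 ω = a0 ∧ L0 ω = l0 ∧ L1 ω = l1) > 0 →
      cpr μ (fun ω => A1 ω = a1) (fun ω => A0 ω = a0 ∧ L0 ω = l0 ∧ L1 ω = l1) > 0)
    (a0 : 𝒜₀) (a1 : 𝒜₁) :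
    ex μ (CY a0 a1) =
    ∑ l0 : ℒ₀, ∑ l1 : ℒ₁,
      cex μ Y (fun ω => A0 ω = a0 ∧ A1 ω = a1 ∧ L0 ω = l0 ∧ L1 ω = l1) *
      cpr μ (fun ω => L1 ω = l1) (fun ω => A0 ω = a0 ∧ L0 ω = l0) *
      pr μ (fun ω => L0 ω = l0) :=
  two_timepoint_gcomputation_general μ hμ L0 A0 L1 A1 CL1 CY Y hconsY SRA0 SRA1 POS0 POS1 a0 a1
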